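/- Let E ⊂ ℝ^{n+1} be n-ADR with dyadic lattice D, σ = H^n⌊E, and let m be a nonnegative function on subfamilies of D given by m(D') = ∑_{Q∈D'} α_Q with α_Q ≥ 0. Fix Q ∈ D, a ≥ 0, b > 0, and suppose m(D(Q)) ≤ (a+b)σ(Q). Then there exists a family F = {Qⱼ} ⊂ D(Q) of pairwise disjoint cubes and a constant C depending only on n and the ADR constant such that: (i) the restricted measure m_F, defined by m_F(D') = ∑_{P ∈ D' not contained in any Qⱼ} α_P, satisfies m_F(D(Q'))/σ(Q') ≤ Cb for every Q' ⊆ Q; and (ii) σ(⋃_{Qⱼ ∈ F_bad} Qⱼ) ≤ ((a+b)/(a+2b)) σ(Q), where F_bad := {Qⱼ ∈ F : m(D(Qⱼ)∖{Qⱼ}) > a σ(Qⱼ)}. -/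

import Mathlib

open Set Metric MeasureTheory Filter Topology
open scoped ENNReal

noncomputable section

/-- `E ⊂ ℝ^{n+1}` is `n`-Ahlfors–David regular with constant `C`:
`E` is closed and `C⁻¹ rⁿ ≤ Hⁿ(E ∩ B(x,r)) ≤ C rⁿ` for `x ∈ E`, `0 < r < diam E`. -/
def IsADR (n : ℕ) (E : Set (EuclideanSpace ℝ (Fin (n+1)))) (C : ℝ) : Prop :=
  IsClosed E ∧ 1 ≤ C ∧
  ∀ x ∈ E, ∀ r : ℝ, 0 < r → ENNReal.ofReal r < EMetric.diam E →
    ENNReal.ofReal (C⁻¹ * r ^ n) ≤ (Measure.hausdorffMeasure (n:ℝ)).restrict E (ball x r) ∧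
    (Measure.hausdorffMeasure (n:ℝ)).restrict E (ball x r) ≤ ENNReal.ofReal (C * r ^ n)

/-- Surface measure `σ = Hⁿ⌊E`. -/
def surf (n : ℕ) (E : Set (EuclideanSpace ℝ (Fin (n+1)))) :
    Measure (EuclideanSpace ℝ (Fin (n+1))) :=
  (Measure.hausdorffMeasure (n:ℝ)).restrict E

/-- A Christ–David dyadic lattice on `E ⊂ ℝ^{n+1}`, with inner-ball constant `a₀` and diameter
constant `C₁`: cubes of generation `k` have diameter `≤ C₁ 2^{-k}`, contain the surface ball of
radius `a₀ 2^{-k}` about their center, cover `E` at every generation, and are nested. -/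
structure DyadicLattice (n : ℕ) (E : Set (EuclideanSpace ℝ (Fin (n+1)))) (a₀ C₁ : ℝ) where
  Cube : Type
  set : Cube → Set (EuclideanSpace ℝ (Fin (n+1)))
  gen : Cube → ℤ
  center : Cube → EuclideanSpace ℝ (Fin (n+1))
  set_inj : Function.Injective set
  nonempty : ∀ Q, (set Q).Nonempty
  subset_E : ∀ Q, set Q ⊆ E
  center_mem : ∀ Q, center Q ∈ set Q
  cover : ∀ k : ℤ, ∀ x ∈ E, ∃ Q, gen Q = k ∧ x ∈ set Q
  nested : ∀ Q Q', gen Q ≤ gen Q' → set Q' ⊆ set Q ∨ Disjoint (set Q') (set Q)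
  diam_le : ∀ Q, Metric.diam (set Q) ≤ C₁ * (2:ℝ) ^ (-gen Q)
  ball_subset : ∀ Q, E ∩ ball (center Q) (a₀ * (2:ℝ) ^ (-gen Q)) ⊆ set Q

/-- Side length `ℓ(Q) = 2^{-gen Q}` of a dyadic cube. -/
def DyadicLattice.len {n : ℕ} {E : Set (EuclideanSpace ℝ (Fin (n+1)))} {a₀ C₁ : ℝ}
    (L : DyadicLattice n E a₀ C₁) (Q : L.Cube) : ℝ := (2:ℝ) ^ (-L.gen Q)

/-!
If `a ≤ 2b`, stop at the maximal cubes `Qⱼ ⊆ Q₀` with `m(D(Qⱼ)) > (a+2b) σ(Qⱼ)`. Above the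
stopping cubes `m(D(Q')) ≤ (a+2b) σ(Q') ≤ 4b σ(Q')`, and the stopping cubes pack:
`(a+2b) ∑ σ(Qⱼ) < ∑ m(D(Qⱼ)) ≤ m(D(Q₀))`.

If `a > 2b`, stop also where `Q` is not heavy (`m(D(Q) ∖ {Q}) ≤ a σ(Q)`), where
`α_Q > 2b σ(Q)`, and where the density `∑ α_R / σ(R)` over the strict ancestors `R ⊆ Q₀` of `Q`
exceeds `4b`. Call a cube free if it lies in no stopping cube. Pairwise disjoint heavy cubes inside
a free cube `R` have total measure at most `2σ(R)`, because their tails are disjoint parts of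
`m(D(R)) ≤ (a+2b) σ(R) ≤ 2a σ(R)`. Along every chain of free cubes the densities `α_P / σ(P)` add
up to at most `6b`, so a layer-cake argument gives `m_F(D(Q')) ≤ 6b ⋅ 2σ(Q')`. A bad stopping cube
satisfies `2(a+2b) σ(Qⱼ) ≤ 2 m(D(Qⱼ)) + σ(Qⱼ) ⋅ density(Qⱼ)`; exchanging the order of summation
and packing again bounds the density terms by `2 ∑ α_R` over the free cubes `R`, and the `D(Qⱼ)`
and the free cubes are disjoint parts of `D(Q₀)`.
-/

theorem ENNReal.ofReal_add_two_mul_mul_le {a b : ℝ} (x : ℝ≥0∞) (h : 2 * b ≤ a) :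
    ENNReal.ofReal (a + 2 * b) * x ≤ ENNReal.ofReal a * (2 * x) :=
  calc ENNReal.ofReal (a + 2 * b) * x ≤ ENNReal.ofReal (a * 2) * x := by
        gcongr
        linarith
    _ = ENNReal.ofReal a * (2 * x) := by
        rw [ENNReal.ofReal_mul' (by norm_num), ENNReal.ofReal_ofNat, mul_assoc]

theorem ENNReal.tsum_subtype_tsum_subtype_comm {ι κ : Type*} {p : ι → Prop} {r : ι → κ → Prop}
    (f : ι → κ → ℝ≥0∞) :
    ∑' i : {i // p i}, ∑' k : {k // r i k}, f i k = ∑' k, ∑' i : {i // p i ∧ r i k}, f i k := by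
  classical
  calc ∑' i : {i // p i}, ∑' k : {k // r i k}, f i k
      = ∑' i, ∑' k, if p i ∧ r i k then f i k else 0 := by
        refine (tsum_subtype {i | p i} fun i => ∑' k : {k // r i k}, f i k).trans
          (tsum_congr fun i => ?_)
        by_cases hp : p i
        · rw [Set.indicator_of_mem (show i ∈ {i | p i} from hp)]
          show ∑' k : ↥{k | r i k}, f i k = _
          simp [tsum_subtype, Set.indicator_apply, hp]
        · simp [hp]
    _ = ∑' k, ∑' i : {i // p i ∧ r i k}, f i k := by
        rw [ENNReal.tsum_comm]
        refine tsum_congr fun k => ?_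
        refine Eq.trans ?_ (tsum_subtype {i | p i ∧ r i k} fun i => f i k).symm
        simp [Set.indicator_apply]

theorem MeasureTheory.sum_mul_measure_le {X ι : Type*} [MeasurableSpace X] (μ : Measure X)
    (s : Finset ι) (W : ι → ℝ≥0∞) (I : ι → Set X) [∀ x, DecidablePred (x ∈ I ·)] {J : Set X}
    {B : ℝ≥0∞}
    (hI : ∀ P ∈ s, MeasurableSet (I P)) (hJ : MeasurableSet J) (hIJ : ∀ P ∈ s, I P ⊆ J)
    (hB : ∀ x ∈ J, ∑ P ∈ s with x ∈ I P, W P ≤ B) :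
    ∑ P ∈ s, W P * μ (I P) ≤ B * μ J := by
  have hpoint : ∀ x, ∑ P ∈ s, (I P).indicator (fun _ => W P) x ≤ J.indicator (fun _ => B) x := by
    intro x
    simp only [Set.indicator_apply, ← Finset.sum_filter]
    by_cases hx : x ∈ J
    · rw [Set.indicator_of_mem hx]
      exact hB x hx
    · rw [Set.indicator_of_notMem hx, Finset.sum_eq_zero fun P hP =>
        absurd (hIJ P (Finset.mem_filter.1 hP).1 (Finset.mem_filter.1 hP).2) hx]
  calc ∑ P ∈ s, W P * μ (I P) = ∫⁻ x, ∑ P ∈ s, (I P).indicator (fun _ => W P) x ∂μ := by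
        rw [lintegral_finsetSum _ fun P hP => measurable_const.indicator (hI P hP)]
        exact Finset.sum_congr rfl fun P hP => (lintegral_indicator_const (hI P hP) _).symm
    _ ≤ ∫⁻ x, J.indicator (fun _ => B) x ∂μ := lintegral_mono hpoint
    _ = B * μ J := lintegral_indicator_const hJ _

open scoped Classical in
theorem Finset.sum_filter_le_eq_add_sum_filter_lt {ι : Type*} [PartialOrder ι] {s : Finset ι}
    {P : ι} (hP : P ∈ s) (g : ι → ℝ≥0∞) :
    ∑ R ∈ s with P ≤ R, g R = g P + ∑ R ∈ s with P < R, g R := by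
  rw [← Finset.sum_insert (by simp)]
  congr 1
  ext R
  simp only [Finset.mem_filter, Finset.mem_insert, le_iff_eq_or_lt]
  constructor
  · rintro ⟨hR, rfl | h⟩ <;> simp_all
  · rintro (rfl | ⟨hR, h⟩) <;> simp_all

open scoped Classical in
/-- Layer cake: `P` occupies the heights `(lo P, hi P]`, where `hi P` is the `g`-sum over the
elements of `s` above `P`; the elements occupying a common height form an antichain. -/
theorem Finset.sum_mul_le_of_isAntichain {ι : Type*} [PartialOrder ι] (s : Finset ι)
    (W g : ι → ℝ≥0∞) {c B : ℝ≥0∞} (hc : c ≠ ⊤)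
    (hg : ∀ P ∈ s, ∑ R ∈ s with P ≤ R, g R ≤ c)
    (hB : ∀ t ⊆ s, IsAntichain (· ≤ ·) (t : Set ι) → ∑ P ∈ t, W P ≤ B) :
    ∑ P ∈ s, W P * g P ≤ c * B := by
  set hi : ι → ℝ := fun P => (∑ R ∈ s with P ≤ R, g R).toReal
  set lo : ι → ℝ := fun P => (∑ R ∈ s with P < R, g R).toReal
  have hsplit := fun P (hP : P ∈ s) => Finset.sum_filter_le_eq_add_sum_filter_lt hP g
  have hfin : ∀ P ∈ s, g P ≠ ⊤ ∧ ∑ R ∈ s with P < R, g R ≠ ⊤ := fun P hP =>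
    ENNReal.add_ne_top.1 (hsplit P hP ▸ ne_top_of_le_ne_top hc (hg P hP))
  have hvol : ∀ P ∈ s, volume (Set.Ioc (lo P) (hi P)) = g P := by
    intro P hP
    rw [Real.volume_Ioc]
    simp only [hi, lo]
    rw [hsplit P hP, ENNReal.toReal_add (hfin P hP).1 (hfin P hP).2,
      add_sub_cancel_right, ENNReal.ofReal_toReal (hfin P hP).1]
  have hi_le_lo : ∀ P ∈ s, ∀ R ∈ s, P < R → hi R ≤ lo P := by
    intro P hP R hR hPR
    refine ENNReal.toReal_mono (hfin P hP).2 (Finset.sum_le_sum_of_subset fun R' hR' => ?_)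
    simp only [Finset.mem_filter] at hR' ⊢
    exact ⟨hR'.1, hPR.trans_le hR'.2⟩
  calc ∑ P ∈ s, W P * g P = ∑ P ∈ s, W P * volume (Set.Ioc (lo P) (hi P)) :=
        Finset.sum_congr rfl fun P hP => by rw [hvol P hP]
    _ ≤ B * volume (Set.Ioc 0 c.toReal) := by
        refine sum_mul_measure_le volume s W _ (fun _ _ => measurableSet_Ioc) measurableSet_Ioc
          (fun P hP τ hτ => ⟨ENNReal.toReal_nonneg.trans_lt hτ.1,
            hτ.2.trans (ENNReal.toReal_mono hc (hg P hP))⟩)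
          fun τ _ => hB _ (Finset.filter_subset _ _) fun P hP R hR hPR hle => ?_
        simp only [Finset.coe_filter, Set.mem_Ioc] at hP hR
        linarith [hi_le_lo P hP.1 R hR.1 (lt_of_le_of_ne hle hPR), hP.2.1, hR.2.2]
    _ = c * B := by rw [Real.volume_Ioc, sub_zero, ENNReal.ofReal_toReal hc, mul_comm]

namespace Corona

variable {ι : Type*} [PartialOrder ι] (α : ι → ℝ≥0∞)

def mass (Q : ι) : ℝ≥0∞ := ∑' P : {P // P ≤ Q}, α P

def tailMass (Q : ι) : ℝ≥0∞ := ∑' P : {P // P ≤ Q ∧ P ≠ Q}, α P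

theorem mass_eq_add_tailMass (Q : ι) : mass α Q = α Q + tailMass α Q := by
  have hsplit : {P | P ≤ Q} = {Q} ∪ {P | P ≤ Q ∧ P ≠ Q} := by
    ext P
    by_cases h : P = Q <;> simp [h]
  calc mass α Q = ∑' P : ↥({Q} ∪ {P | P ≤ Q ∧ P ≠ Q}), α P := by rw [← hsplit]; rfl
    _ = α Q + tailMass α Q := by
      rw [ENNReal.summable.tsum_union_disjoint (by simp) ENNReal.summable, tsum_singleton]
      rfl

theorem tailMass_le_mass (Q : ι) : tailMass α Q ≤ mass α Q :=
  (mass_eq_add_tailMass α Q).symm ▸ le_add_self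

theorem tsum_uncovered_eq_zero {F : Set ι} {Q : ι} (h : ∃ j ∈ F, Q ≤ j) :
    ∑' P : {P // P ≤ Q ∧ ¬∃ j ∈ F, P ≤ j}, α P = 0 := by
  obtain ⟨j, hj, hQj⟩ := h
  have : IsEmpty {P // P ≤ Q ∧ ¬∃ j ∈ F, P ≤ j} := ⟨fun P => P.2.2 ⟨j, hj, P.2.1.trans hQj⟩⟩
  exact tsum_empty

end Corona

namespace DyadicLattice

variable {n : ℕ} {E : Set (EuclideanSpace ℝ (Fin (n+1)))} {a₀ C₁ : ℝ}

instance instPartialOrderCube (L : DyadicLattice n E a₀ C₁) : PartialOrder L.Cube :=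
  PartialOrder.lift L.set L.set_inj

variable {L : DyadicLattice n E a₀ C₁} {P Q : L.Cube}

theorem not_disjoint_of_le (h : P ≤ Q) : ¬Disjoint (L.set P) (L.set Q) := by
  obtain ⟨x, hx⟩ := L.nonempty P
  exact Set.not_disjoint_iff.2 ⟨x, hx, h hx⟩

theorem le_or_le_or_disjoint (P Q : L.Cube) :
    P ≤ Q ∨ Q ≤ P ∨ Disjoint (L.set P) (L.set Q) := by
  rcases le_total (L.gen P) (L.gen Q) with hg | hg
  · rcases L.nested P Q hg with h | h
    · exact Or.inr (Or.inl h)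
    · exact Or.inr (Or.inr h.symm)
  · rcases L.nested Q P hg with h | h
    · exact Or.inl h
    · exact Or.inr (Or.inr h)

theorem gen_le_gen_of_le (h : P ≤ Q) : L.gen Q ≤ L.gen P := by
  by_contra! hlt
  rcases L.nested P Q hlt.le with hQP | hdisj
  · exact hlt.ne (congrArg L.gen (le_antisymm h hQP))
  · exact not_disjoint_of_le h hdisj.symm

theorem eq_of_gen_eq_of_not_disjoint (hg : L.gen P = L.gen Q)
    (h : ¬Disjoint (L.set P) (L.set Q)) : P = Q := by
  have hQP : Q ≤ P := (L.nested P Q hg.le).resolve_right fun hd => h hd.symm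
  have hPQ : P ≤ Q := (L.nested Q P hg.ge).resolve_right h
  exact le_antisymm hPQ hQP

theorem finite_Icc (P Q : L.Cube) : (Set.Icc P Q).Finite := by
  refine Set.Finite.of_finite_image (f := L.gen) ((Set.finite_Icc (L.gen Q) (L.gen P)).subset ?_) ?_
  · rintro _ ⟨R, hR, rfl⟩
    exact ⟨gen_le_gen_of_le hR.2, gen_le_gen_of_le hR.1⟩
  · intro R hR R' hR' hg
    refine eq_of_gen_eq_of_not_disjoint hg fun hd => ?_
    obtain ⟨x, hx⟩ := L.nonempty P
    exact Set.disjoint_left.1 hd (hR.1 hx) (hR'.1 hx)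

theorem exists_le_maximal {S : Set L.Cube} {Q₀ : L.Cube} (hS : S ⊆ Set.Iic Q₀) (hP : P ∈ S) :
    ∃ M, P ≤ M ∧ Maximal (· ∈ S) M := by
  obtain ⟨M, hPM, hM⟩ :=
    ((finite_Icc P Q₀).inter_of_right S).exists_le_maximal ⟨hP, le_rfl, hS hP⟩
  exact ⟨M, hPM, hM.1.1, fun R hR hMR => hM.2 ⟨hR, hPM.trans hMR, hS hR⟩ hMR⟩

theorem pairwiseDisjoint_of_isAntichain {A : Set L.Cube} (hA : IsAntichain (· ≤ ·) A) :
    A.PairwiseDisjoint L.set := fun P hP Q hQ hPQ =>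
  ((le_or_le_or_disjoint P Q).resolve_left (hA hP hQ hPQ)).resolve_left (hA hQ hP hPQ.symm)

theorem disjoint_Iic_of_disjoint (h : Disjoint (L.set P) (L.set Q)) :
    Disjoint (Set.Iic P) (Set.Iic Q) := by
  refine Set.disjoint_left.2 fun R (hRP : R ≤ P) (hRQ : R ≤ Q) => ?_
  obtain ⟨x, hx⟩ := L.nonempty R
  exact Set.disjoint_left.1 h (hRP hx) (hRQ hx)

theorem le_dist_center (hg : L.gen P = L.gen Q) (hPQ : P ≠ Q) :
    a₀ * (2:ℝ) ^ (-L.gen P) ≤ dist (L.center Q) (L.center P) := by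
  by_contra! hlt
  have hQP : L.center Q ∈ L.set P := L.ball_subset P ⟨L.subset_E Q (L.center_mem Q), mem_ball.2 hlt⟩
  exact hPQ (eq_of_gen_eq_of_not_disjoint hg (Set.not_disjoint_iff.2 ⟨_, hQP, L.center_mem Q⟩))

/-- Cubes of one generation have disjoint inner balls, and `ℝ^{n+1}` is separable. -/
theorem countable (ha₀ : 0 < a₀) : Countable L.Cube := by
  have hgen : ∀ k : ℤ, {Q : L.Cube | L.gen Q = k}.Countable := fun k =>
    Set.PairwiseDisjoint.countable_of_isOpen
      (s := fun Q => ball (L.center Q) (a₀ * (2:ℝ) ^ (-k) / 2))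
      (fun P hP Q hQ hPQ => ball_disjoint_ball (by
        have := le_dist_center (hP.trans hQ.symm) hPQ
        rw [hP] at this
        rw [dist_comm]
        linarith))
      (fun _ _ => isOpen_ball) (fun _ _ => nonempty_ball.2 (by positivity))
  refine Set.countable_univ_iff.1 ((Set.countable_iUnion hgen).mono fun Q _ => ?_)
  exact Set.mem_iUnion.2 ⟨_, rfl⟩

end DyadicLattice

namespace DyadicLattice

open Corona

variable {n : ℕ} {E : Set (EuclideanSpace ℝ (Fin (n+1)))} {a₀ C₁ : ℝ}
  {L : DyadicLattice n E a₀ C₁} (μ : Measure (EuclideanSpace ℝ (Fin (n+1))))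
  (α : L.Cube → ℝ≥0∞) {P Q Q₀ : L.Cube} {a b : ℝ}

theorem tsum_mass_add_tsum_uncovered_le {A : Set L.Cube} (hA : A.PairwiseDisjoint L.set)
    (hAQ : A ⊆ Set.Iic Q) :
    ∑' j : A, mass α j + ∑' P : {P // P ≤ Q ∧ ¬∃ j ∈ A, P ≤ j}, α P ≤ mass α Q := by
  have hIic : A.PairwiseDisjoint Set.Iic := fun j hj k hk hjk =>
    disjoint_Iic_of_disjoint (hA hj hk hjk)
  have hdisj : Disjoint (⋃ j ∈ A, Set.Iic j) {P | P ≤ Q ∧ ¬∃ j ∈ A, P ≤ j} :=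
    Set.disjoint_left.2 fun P hP hP' => hP'.2 (by simpa using hP)
  have hsub : (⋃ j ∈ A, Set.Iic j) ∪ {P | P ≤ Q ∧ ¬∃ j ∈ A, P ≤ j} ⊆ Set.Iic Q :=
    Set.union_subset (Set.iUnion₂_subset fun j hj => Set.Iic_subset_Iic.2 (hAQ hj))
      fun P hP => hP.1
  calc ∑' j : A, mass α j + ∑' P : {P // P ≤ Q ∧ ¬∃ j ∈ A, P ≤ j}, α P
      = ∑' P : ↥((⋃ j ∈ A, Set.Iic j) ∪ {P | P ≤ Q ∧ ¬∃ j ∈ A, P ≤ j}), α P := by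
        rw [ENNReal.summable.tsum_union_disjoint hdisj ENNReal.summable,
          ENNReal.tsum_biUnion' hIic]
        rfl
    _ ≤ mass α Q := ENNReal.tsum_mono_subtype α hsub

theorem tsum_measure_le_of_mul_le_tailMass {c M : ℝ≥0∞} (hc₀ : c ≠ 0) (hc : c ≠ ⊤)
    {A : Set L.Cube} (hA : A.PairwiseDisjoint L.set) (hAQ : A ⊆ Set.Iic Q)
    (hheavy : ∀ j ∈ A, c * μ (L.set j) ≤ tailMass α j) (hQ : mass α Q ≤ c * M) :
    ∑' j : A, μ (L.set j) ≤ M := by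
  refine (ENNReal.mul_le_mul_iff_right hc₀ hc).1 ?_
  calc c * ∑' j : A, μ (L.set j) = ∑' j : A, c * μ (L.set j) := ENNReal.tsum_mul_left.symm
    _ ≤ ∑' j : A, mass α j :=
        ENNReal.tsum_le_tsum fun j => (hheavy j j.2).trans (tailMass_le_mass α j)
    _ ≤ mass α Q := le_self_add.trans (tsum_mass_add_tsum_uncovered_le α hA hAQ)
    _ ≤ c * M := hQ

theorem mul_measure_biUnion_le [Countable L.Cube] (c : ℝ≥0∞) (B : Set L.Cube) :
    c * μ (⋃ j ∈ B, L.set j) ≤ ∑' j : B, c * μ (L.set j) := by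
  rw [ENNReal.tsum_mul_left]
  gcongr
  exact measure_biUnion_le μ B.to_countable _

theorem pairwiseDisjoint_maximal (S : Set L.Cube) :
    {Q | Maximal (· ∈ S) Q}.PairwiseDisjoint L.set :=
  pairwiseDisjoint_of_isAntichain (setOfPred_maximal_antichain _)

theorem notMem_of_not_le_maximal {S : Set L.Cube} (hS : S ⊆ Set.Iic Q₀)
    (hP : ¬∃ j ∈ {Q | Maximal (· ∈ S) Q}, P ≤ j) : P ∉ S := fun h =>
  let ⟨M, hPM, hM⟩ := exists_le_maximal hS h
  hP ⟨M, hM, hPM⟩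

def badCubes (a : ℝ) (F : Set L.Cube) : Set L.Cube :=
  {j ∈ F | ENNReal.ofReal a * μ (L.set j) < tailMass α j}

def highMassFamily (Q₀ : L.Cube) (c : ℝ≥0∞) : Set L.Cube :=
  {Q | Maximal (· ∈ {Q | Q ≤ Q₀ ∧ c * μ (L.set Q) < mass α Q}) Q}

theorem carleson_highMassFamily (hb : 0 ≤ b) (hab : a ≤ 2 * b) (hQ' : P ≤ Q₀) :
    ∑' R : {R // R ≤ P ∧ ¬∃ j ∈ highMassFamily μ α Q₀ (.ofReal (a + 2 * b)), R ≤ j}, α R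
      ≤ ENNReal.ofReal (12 * b) * μ (L.set P) := by
  by_cases hcov : ∃ j ∈ highMassFamily μ α Q₀ (.ofReal (a + 2 * b)), P ≤ j
  · simp [tsum_uncovered_eq_zero α hcov]
  have hP := notMem_of_not_le_maximal (fun Q hQ => hQ.1) hcov
  calc _ ≤ mass α P := ENNReal.tsum_mono_subtype α fun R hR => hR.1
    _ ≤ ENNReal.ofReal (a + 2 * b) * μ (L.set P) := not_lt.1 fun h => hP ⟨hQ', h⟩
    _ ≤ ENNReal.ofReal (12 * b) * μ (L.set P) := by
        gcongr
        linarith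

theorem measure_badCubes_highMassFamily_le [Countable L.Cube]
    (hm : mass α Q₀ ≤ ENNReal.ofReal (a + b) * μ (L.set Q₀)) :
    ENNReal.ofReal (a + 2 * b) *
        μ (⋃ j ∈ badCubes μ α a (highMassFamily μ α Q₀ (.ofReal (a + 2 * b))), L.set j)
      ≤ ENNReal.ofReal (a + b) * μ (L.set Q₀) := by
  set F := highMassFamily μ α Q₀ (.ofReal (a + 2 * b))
  calc _ ≤ ∑' j : badCubes μ α a F, ENNReal.ofReal (a + 2 * b) * μ (L.set j) :=
        mul_measure_biUnion_le μ _ _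
    _ ≤ ∑' j : badCubes μ α a F, mass α j := ENNReal.tsum_le_tsum fun j => j.2.1.1.2.le
    _ ≤ mass α Q₀ := le_self_add.trans <| tsum_mass_add_tsum_uncovered_le α
        ((pairwiseDisjoint_maximal _).subset fun j hj => hj.1) fun j hj => hj.1.1.1
    _ ≤ _ := hm

def ancestorDensity (Q₀ Q : L.Cube) : ℝ≥0∞ :=
  ∑' R : {R // Q < R ∧ R ≤ Q₀}, α R / μ (L.set R)

def coronaFamily (Q₀ : L.Cube) (a b : ℝ) : Set L.Cube :=
  {Q | Maximal (· ∈ {Q | Q ≤ Q₀ ∧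
    (¬ENNReal.ofReal a * μ (L.set Q) < tailMass α Q ∨
      ENNReal.ofReal (a + 2 * b) * μ (L.set Q) < mass α Q ∨
      ENNReal.ofReal (2 * b) * μ (L.set Q) < α Q ∨
      ENNReal.ofReal (4 * b) < ancestorDensity μ α Q₀ Q)}) Q}

theorem free_of_not_le_coronaFamily (hP : P ≤ Q₀)
    (hcov : ¬∃ j ∈ coronaFamily μ α Q₀ a b, P ≤ j) :
    ENNReal.ofReal a * μ (L.set P) < tailMass α P ∧
      mass α P ≤ ENNReal.ofReal (a + 2 * b) * μ (L.set P) ∧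
      α P ≤ ENNReal.ofReal (2 * b) * μ (L.set P) ∧
      ancestorDensity μ α Q₀ P ≤ ENNReal.ofReal (4 * b) := by
  have h := notMem_of_not_le_maximal (fun Q hQ => hQ.1) hcov
  simp only [Set.mem_ofPred_eq, not_and, not_or, not_lt] at h
  obtain ⟨h1, h2, h3, h4⟩ := h hP
  exact ⟨not_le.1 h1, h2, h3, h4⟩

theorem tsum_measure_le_of_not_le_coronaFamily (hab : 2 * b ≤ a) (hb : 0 < b) (hQ : Q ≤ Q₀)
    (hQfree : ¬∃ j ∈ coronaFamily μ α Q₀ a b, Q ≤ j) {A : Set L.Cube}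
    (hA : A.PairwiseDisjoint L.set) (hAQ : A ⊆ Set.Iic Q)
    (hheavy : ∀ j ∈ A, ENNReal.ofReal a * μ (L.set j) ≤ tailMass α j) :
    ∑' j : A, μ (L.set j) ≤ 2 * μ (L.set Q) :=
  tsum_measure_le_of_mul_le_tailMass μ α (ENNReal.ofReal_pos.2 (by linarith)).ne'
    ENNReal.ofReal_ne_top hA hAQ hheavy
    ((free_of_not_le_coronaFamily μ α hQ hQfree).2.1.trans
      (ENNReal.ofReal_add_two_mul_mul_le _ hab))

theorem sum_le_of_not_le_coronaFamily (hab : 2 * b ≤ a) (hb : 0 < b) (hQ : Q ≤ Q₀)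
    (hQfree : ¬∃ j ∈ coronaFamily μ α Q₀ a b, Q ≤ j) (hfin : μ (L.set Q) ≠ ⊤)
    (s : Finset L.Cube) (hs : ∀ P ∈ s, P ≤ Q ∧ ¬∃ j ∈ coronaFamily μ α Q₀ a b, P ≤ j) :
    ∑ P ∈ s, α P ≤ ENNReal.ofReal (6 * b) * (2 * μ (L.set Q)) := by
  classical
  have hfree := fun P (hP : P ∈ s) =>
    free_of_not_le_coronaFamily μ α ((hs P hP).1.trans hQ) (hs P hP).2
  have hα : ∀ P ∈ s, μ (L.set P) * (α P / μ (L.set P)) = α P := fun P hP => by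
    rw [mul_comm]
    refine ENNReal.div_mul_cancel' (fun h0 => ?_) (fun htop => ?_)
    · simpa [h0] using (hfree P hP).2.2.1
    · exact absurd htop (ne_top_of_le_ne_top hfin (measure_mono (hs P hP).1))
  rw [← Finset.sum_congr rfl hα]
  refine Finset.sum_mul_le_of_isAntichain s _ _ ENNReal.ofReal_ne_top (fun P hP => ?_)
    fun t hts ht => ?_
  · have hanc : ∑ R ∈ s with P < R, α R / μ (L.set R) ≤ ancestorDensity μ α Q₀ P :=
      (Finset.tsum_subtype _ _).symm.trans_le <|
        ENNReal.tsum_mono_subtype (fun R => α R / μ (L.set R)) (t := {R | P < R ∧ R ≤ Q₀})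
          fun R hR => by
            have hR := Finset.mem_filter.1 hR
            exact ⟨hR.2, (hs R hR.1).1.trans hQ⟩
    calc ∑ R ∈ s with P ≤ R, α R / μ (L.set R)
        = α P / μ (L.set P) + ∑ R ∈ s with P < R, α R / μ (L.set R) :=
          Finset.sum_filter_le_eq_add_sum_filter_lt hP _
      _ ≤ ENNReal.ofReal (2 * b) + ENNReal.ofReal (4 * b) :=
          add_le_add (ENNReal.div_le_of_le_mul (hfree P hP).2.2.1) (hanc.trans (hfree P hP).2.2.2)
      _ = ENNReal.ofReal (6 * b) := by
          rw [← ENNReal.ofReal_add (by positivity) (by positivity)]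
          ring_nf
  · rw [← Finset.tsum_subtype]
    exact tsum_measure_le_of_not_le_coronaFamily μ α hab hb hQ hQfree
      (pairwiseDisjoint_of_isAntichain ht) (fun P hP => (hs P (hts hP)).1)
      fun P hP => (hfree P (hts hP)).1.le

theorem carleson_coronaFamily (hab : 2 * b ≤ a) (hb : 0 < b) (hQ : Q ≤ Q₀) :
    ∑' P : {P // P ≤ Q ∧ ¬∃ j ∈ coronaFamily μ α Q₀ a b, P ≤ j}, α P
      ≤ ENNReal.ofReal (12 * b) * μ (L.set Q) := by
  by_cases hcov : ∃ j ∈ coronaFamily μ α Q₀ a b, Q ≤ j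
  · simp [tsum_uncovered_eq_zero α hcov]
  by_cases hfin : μ (L.set Q) = ⊤
  · simp [hfin, ENNReal.mul_top, hb]
  have h12 : ENNReal.ofReal (6 * b) * 2 = ENNReal.ofReal (12 * b) := by
    rw [← ENNReal.ofReal_ofNat 2, ← ENNReal.ofReal_mul (by positivity)]
    ring_nf
  rw [ENNReal.tsum_eq_iSup_sum, ← h12, mul_assoc]
  refine iSup_le fun t => ?_
  calc ∑ P ∈ t, α P.1 = ∑ P ∈ t.map (Function.Embedding.subtype _), α P :=
        (Finset.sum_map t (Function.Embedding.subtype _) α).symm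
    _ ≤ _ := sum_le_of_not_le_coronaFamily μ α hab hb hQ hcov hfin _ fun P hP => by
        obtain ⟨x, -, rfl⟩ := Finset.mem_map.1 hP
        exact x.2

theorem two_mul_le_of_mem_badCubes_coronaFamily (ha : 0 ≤ a) (hb : 0 ≤ b) {j : L.Cube}
    (hj : j ∈ badCubes μ α a (coronaFamily μ α Q₀ a b)) :
    2 * (ENNReal.ofReal (a + 2 * b) * μ (L.set j))
      ≤ 2 * mass α j + μ (L.set j) * ancestorDensity μ α Q₀ j := by
  have hsplit : ENNReal.ofReal (a + 2 * b) * μ (L.set j)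
      = ENNReal.ofReal a * μ (L.set j) + ENNReal.ofReal (2 * b) * μ (L.set j) := by
    rw [ENNReal.ofReal_add ha (by positivity), add_mul]
  rcases hj.1.1.2 with hlight | hmass | hα | hη
  · exact absurd hj.2 hlight
  · exact le_add_right (by gcongr)
  · refine le_add_right (mul_le_mul_right ?_ 2)
    calc _ = ENNReal.ofReal a * μ (L.set j) + ENNReal.ofReal (2 * b) * μ (L.set j) := hsplit
      _ ≤ tailMass α j + α j := add_le_add hj.2.le hα.le
      _ = mass α j := by rw [mass_eq_add_tailMass, add_comm]
  · have h4 : ENNReal.ofReal (4 * b) = 2 * ENNReal.ofReal (2 * b) := by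
      rw [← ENNReal.ofReal_ofNat 2, ← ENNReal.ofReal_mul (by norm_num)]
      ring_nf
    calc 2 * (ENNReal.ofReal (a + 2 * b) * μ (L.set j))
        = 2 * (ENNReal.ofReal a * μ (L.set j)) + μ (L.set j) * ENNReal.ofReal (4 * b) := by
          rw [hsplit, h4]
          ring
      _ ≤ 2 * mass α j + μ (L.set j) * ancestorDensity μ α Q₀ j := by
          gcongr
          exact hj.2.le.trans (tailMass_le_mass α j)

theorem tsum_measure_mul_ancestorDensity_le (hab : 2 * b ≤ a) (hb : 0 < b) :
    ∑' j : badCubes μ α a (coronaFamily μ α Q₀ a b), μ (L.set j) * ancestorDensity μ α Q₀ j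
      ≤ 2 * ∑' R : {R // R ≤ Q₀ ∧ ¬∃ k ∈ coronaFamily μ α Q₀ a b, R ≤ k}, α R := by
  set F := coronaFamily μ α Q₀ a b
  set B := badCubes μ α a F
  set free := {R | R ≤ Q₀ ∧ ¬∃ k ∈ F, R ≤ k}
  have hinner : ∀ R, ∑' j : {j // j ∈ B ∧ (j < R ∧ R ≤ Q₀)}, μ (L.set j) * (α R / μ (L.set R))
      ≤ free.indicator (fun R => 2 * α R) R := by
    intro R
    by_cases hR : R ∈ free
    · rw [Set.indicator_of_mem hR, ENNReal.tsum_mul_right]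
      have hcap : ∑' j : {j // j ∈ B ∧ (j < R ∧ R ≤ Q₀)}, μ (L.set j) ≤ 2 * μ (L.set R) :=
        tsum_measure_le_of_not_le_coronaFamily μ α hab hb hR.1 hR.2
          (A := {j | j ∈ B ∧ (j < R ∧ R ≤ Q₀)})
          ((pairwiseDisjoint_maximal _).subset fun j hj => hj.1.1) (fun j hj => hj.2.1.le)
          fun j hj => hj.1.2.le
      calc _ ≤ 2 * μ (L.set R) * (α R / μ (L.set R)) := by gcongr
        _ = 2 * (μ (L.set R) * (α R / μ (L.set R))) := mul_assoc _ _ _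
        _ ≤ 2 * α R := by gcongr; exact ENNReal.mul_div_le
    · rw [Set.indicator_of_notMem hR]
      -- a cube strictly above a maximal stopping cube lies in no stopping cube
      have : IsEmpty {j // j ∈ B ∧ (j < R ∧ R ≤ Q₀)} := ⟨fun j => hR ⟨j.2.2.2,
        fun ⟨k, hk, hRk⟩ => j.2.1.1.not_gt hk.1 (j.2.2.1.trans_le hRk)⟩⟩
      simp
  calc ∑' j : B, μ (L.set j) * ancestorDensity μ α Q₀ j
      = ∑' j : B, ∑' R : {R // j.1 < R ∧ R ≤ Q₀}, μ (L.set j) * (α R / μ (L.set R)) :=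
        tsum_congr fun j => ENNReal.tsum_mul_left.symm
    _ = ∑' R, ∑' j : {j // j ∈ B ∧ (j < R ∧ R ≤ Q₀)}, μ (L.set j) * (α R / μ (L.set R)) :=
        ENNReal.tsum_subtype_tsum_subtype_comm (p := (· ∈ B)) (r := fun j R => j < R ∧ R ≤ Q₀)
          fun j R => μ (L.set j) * (α R / μ (L.set R))
    _ ≤ ∑' R, free.indicator (fun R => 2 * α R) R := ENNReal.tsum_le_tsum hinner
    _ = 2 * ∑' R : free, α R := by rw [← tsum_subtype, ENNReal.tsum_mul_left]

theorem measure_badCubes_coronaFamily_le [Countable L.Cube] (hab : 2 * b ≤ a) (hb : 0 < b)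
    (hm : mass α Q₀ ≤ ENNReal.ofReal (a + b) * μ (L.set Q₀)) :
    ENNReal.ofReal (a + 2 * b) * μ (⋃ j ∈ badCubes μ α a (coronaFamily μ α Q₀ a b), L.set j)
      ≤ ENNReal.ofReal (a + b) * μ (L.set Q₀) := by
  set F := coronaFamily μ α Q₀ a b
  set B := badCubes μ α a F
  have hB : B.PairwiseDisjoint L.set := (pairwiseDisjoint_maximal _).subset fun j hj => hj.1
  have hfree : ∑' R : {R // R ≤ Q₀ ∧ ¬∃ k ∈ F, R ≤ k}, α R
      ≤ ∑' R : {R // R ≤ Q₀ ∧ ¬∃ k ∈ B, R ≤ k}, α R :=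
    ENNReal.tsum_mono_subtype α (s := {R | R ≤ Q₀ ∧ ¬∃ k ∈ F, R ≤ k})
      (t := {R | R ≤ Q₀ ∧ ¬∃ k ∈ B, R ≤ k})
      fun R hR => ⟨hR.1, fun ⟨k, hk, hRk⟩ => hR.2 ⟨k, hk.1, hRk⟩⟩
  refine (ENNReal.mul_le_mul_iff_right two_ne_zero ENNReal.ofNat_ne_top).1 ?_
  calc 2 * (ENNReal.ofReal (a + 2 * b) * μ (⋃ j ∈ B, L.set j))
      ≤ 2 * ∑' j : B, ENNReal.ofReal (a + 2 * b) * μ (L.set j) := by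
        gcongr
        exact mul_measure_biUnion_le μ _ _
    _ = ∑' j : B, 2 * (ENNReal.ofReal (a + 2 * b) * μ (L.set j)) := ENNReal.tsum_mul_left.symm
    _ ≤ ∑' j : B, (2 * mass α j + μ (L.set j) * ancestorDensity μ α Q₀ j) :=
        ENNReal.tsum_le_tsum fun j =>
          two_mul_le_of_mem_badCubes_coronaFamily μ α (by linarith) hb.le j.2
    _ = 2 * ∑' j : B, mass α j + ∑' j : B, μ (L.set j) * ancestorDensity μ α Q₀ j := by
        rw [ENNReal.tsum_add, ENNReal.tsum_mul_left]
    _ ≤ 2 * ∑' j : B, mass α j + 2 * ∑' R : {R // R ≤ Q₀ ∧ ¬∃ k ∈ B, R ≤ k}, α R := by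
        gcongr
        exact (tsum_measure_mul_ancestorDensity_le μ α hab hb).trans (mul_le_mul_right hfree 2)
    _ = 2 * (∑' j : B, mass α j + ∑' R : {R // R ≤ Q₀ ∧ ¬∃ k ∈ B, R ≤ k}, α R) :=
        (mul_add _ _ _).symm
    _ ≤ 2 * mass α Q₀ := by
        gcongr
        exact tsum_mass_add_tsum_uncovered_le α hB fun j hj => hj.1.1.1
    _ ≤ 2 * (ENNReal.ofReal (a + b) * μ (L.set Q₀)) := by gcongr

end DyadicLattice

theorem corona_stopping_lemma_general (n : ℕ) (Cadr a₀ C₁ : ℝ)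
    (ha₀ : 0 < a₀) :
    ∃ C : ℝ, 0 < C ∧
      ∀ (E : Set (EuclideanSpace ℝ (Fin (n+1)))), IsADR n E Cadr →
      ∀ (L : DyadicLattice n E a₀ C₁) (α : L.Cube → ℝ≥0∞) (Q₀ : L.Cube) (a b : ℝ),
        0 ≤ a → 0 < b →
        (∑' P : {P : L.Cube // L.set P ⊆ L.set Q₀}, α P.1
            ≤ ENNReal.ofReal (a + b) * surf n E (L.set Q₀)) →
        ∃ F : Set L.Cube,
          (∀ Qj ∈ F, L.set Qj ⊆ L.set Q₀) ∧
          (∀ Qj ∈ F, ∀ Qk ∈ F, Qj ≠ Qk → Disjoint (L.set Qj) (L.set Qk)) ∧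
          -- (i) the restricted measure `m_F` satisfies a Carleson condition with constant `C b`
          (∀ Q' : L.Cube, L.set Q' ⊆ L.set Q₀ →
            ∑' P : {P : L.Cube //
                L.set P ⊆ L.set Q' ∧ ¬ ∃ Qj ∈ F, L.set P ⊆ L.set Qj}, α P.1
              ≤ ENNReal.ofReal (C * b) * surf n E (L.set Q')) ∧
          -- (ii) the bad cubes are small:  σ(⋃ F_bad) ⋅ (a+2b) ≤ (a+b) ⋅ σ(Q₀)
          ENNReal.ofReal (a + 2*b) *
              surf n E (⋃ Qj ∈ {Qj ∈ F | ENNReal.ofReal a * surf n E (L.set Qj) <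
                ∑' P : {P : L.Cube // L.set P ⊆ L.set Qj ∧ P ≠ Qj}, α P.1}, L.set Qj)
            ≤ ENNReal.ofReal (a + b) * surf n E (L.set Q₀) := by
  refine ⟨12, by norm_num, fun E _ L α Q₀ a b _ hb hm => ?_⟩
  have := L.countable ha₀
  rcases le_or_gt a (2 * b) with hab | hab
  · exact ⟨DyadicLattice.highMassFamily (surf n E) α Q₀ (.ofReal (a + 2 * b)),
      fun j hj => hj.1.1, DyadicLattice.pairwiseDisjoint_maximal _,
      fun Q hQ => DyadicLattice.carleson_highMassFamily _ α hb.le hab hQ,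
      DyadicLattice.measure_badCubes_highMassFamily_le _ α hm⟩
  · exact ⟨DyadicLattice.coronaFamily (surf n E) α Q₀ a b,
      fun j hj => hj.1.1, DyadicLattice.pairwiseDisjoint_maximal _,
      fun Q hQ => DyadicLattice.carleson_coronaFamily _ α hab.le hb hQ,
      DyadicLattice.measure_badCubes_coronaFamily_le _ α hab.le hb hm⟩

/-- the corona-type stopping time lemma, [HM-I, Lemma 7.2].
Let `E` be `n`-ADR with dyadic lattice `D` and let `m(D') = ∑_{P ∈ D'} α_P` be a discrete
measure with nonnegative coefficients.  If `m(D(Q₀)) ≤ (a+b) σ(Q₀)`, then there is a pairwise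
disjoint family `F ⊂ D(Q₀)` such that the restricted measure `m_F` (summing only over cubes not
contained in any member of `F`) satisfies `‖m_F‖_{C(Q₀)} ≤ C b`, and the bad cubes of `F` (those
with `m(D(Q_j) ∖ {Q_j}) > a σ(Q_j)`) occupy at most a fraction `(a+b)/(a+2b)` of `σ(Q₀)`;
here `C = C(n, ADR)`. -/
theorem corona_stopping_lemma (n : ℕ) (Cadr a₀ C₁ : ℝ)
    (hCadr : 1 ≤ Cadr) (ha₀ : 0 < a₀) (hC₁ : 0 < C₁) :
    ∃ C : ℝ, 0 < C ∧
      ∀ (E : Set (EuclideanSpace ℝ (Fin (n+1)))), IsADR n E Cadr →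
      ∀ (L : DyadicLattice n E a₀ C₁) (α : L.Cube → ℝ≥0∞) (Q₀ : L.Cube) (a b : ℝ),
        0 ≤ a → 0 < b →
        (∑' P : {P : L.Cube // L.set P ⊆ L.set Q₀}, α P.1
            ≤ ENNReal.ofReal (a + b) * surf n E (L.set Q₀)) →
        ∃ F : Set L.Cube,
          (∀ Qj ∈ F, L.set Qj ⊆ L.set Q₀) ∧
          (∀ Qj ∈ F, ∀ Qk ∈ F, Qj ≠ Qk → Disjoint (L.set Qj) (L.set Qk)) ∧
          -- (i) the restricted measure `m_F` satisfies a Carleson condition with constant `C b`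
          (∀ Q' : L.Cube, L.set Q' ⊆ L.set Q₀ →
            ∑' P : {P : L.Cube //
                L.set P ⊆ L.set Q' ∧ ¬ ∃ Qj ∈ F, L.set P ⊆ L.set Qj}, α P.1
              ≤ ENNReal.ofReal (C * b) * surf n E (L.set Q')) ∧
          -- (ii) the bad cubes are small:  σ(⋃ F_bad) ⋅ (a+2b) ≤ (a+b) ⋅ σ(Q₀)
          ENNReal.ofReal (a + 2*b) *
              surf n E (⋃ Qj ∈ {Qj ∈ F | ENNReal.ofReal a * surf n E (L.set Qj) <
                ∑' P : {P : L.Cube // L.set P ⊆ L.set Qj ∧ P ≠ Qj}, α P.1}, L.set Qj)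
            ≤ ENNReal.ofReal (a + b) * surf n E (L.set Q₀) :=
  corona_stopping_lemma_general n Cadr a₀ C₁ ha₀
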